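/- arXiv:1802.05953 — 5 statements merged into one kernel-verified Lean document; each statement's English description precedes it below -/
import Mathlib

section
/- For every finite simple graph G and every positive integer k, the k-dynamic chromatic number satisfies χ_k(G) ≤ χ(G) · wd_k(G), where χ(G) is the chromatic number of G. -/
open SimpleGraph

/-- `H` is a minor of `G`: there are nonempty, connected, pairwise disjoint branch sets
in `G`, with an edge of `G` between the branch sets of any two adjacent vertices of `H`. -/
def HasMinor {V W : Type} (G : SimpleGraph V) (H : SimpleGraph W) : Prop :=
  ∃ f : W → Set V,
    (∀ w, (f w).Nonempty) ∧
    (∀ w, (G.induce (f w)).Connected) ∧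
    (∀ w w', w ≠ w' → Disjoint (f w) (f w')) ∧
    (∀ w w', H.Adj w w' → ∃ a ∈ f w, ∃ b ∈ f w', G.Adj a b)

/-- A graph is planar iff it has no `K₅` minor and no `K_{3,3}` minor (Wagner's theorem). -/
def IsPlanar {V : Type} (G : SimpleGraph V) : Prop :=
  ¬ HasMinor G (⊤ : SimpleGraph (Fin 5)) ∧
  ¬ HasMinor G (completeBipartiteGraph (Fin 3) (Fin 3))

/-- The degree of a vertex `v`, the number of its neighbors. -/
noncomputable def deg {V : Type} (G : SimpleGraph V) (v : V) : ℕ :=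
  (G.neighborSet v).ncard

/-- `G` admits a `k`-weak-dynamic coloring with `n` colors: a (not necessarily proper)
coloring such that every vertex `v` sees at least `min k (d v)` colors on its neighborhood. -/
def WDColorable {V : Type} (G : SimpleGraph V) (k n : ℕ) : Prop :=
  ∃ c : V → Fin n, ∀ v, min k (deg G v) ≤ (c '' G.neighborSet v).ncard


/-- The `k`-weak-dynamic number of `G`: the smallest number of colors in a
`k`-weak-dynamic coloring of `G`. -/
noncomputable def wdNum {V : Type} (G : SimpleGraph V) (k : ℕ) : ℕ :=
  sInf {n | WDColorable G k n}

/-- `G` admits a `k`-dynamic coloring with `n` colors: a proper coloring such that every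
vertex `v` sees at least `min k (d v)` colors on its neighborhood. -/
def DynColorable {V : Type} (G : SimpleGraph V) (k n : ℕ) : Prop :=
  ∃ c : V → Fin n, (∀ u v, G.Adj u v → c u ≠ c v) ∧
    ∀ v, min k (deg G v) ≤ (c '' G.neighborSet v).ncard

/-- The `k`-dynamic chromatic number `χ_k(G)`. -/
noncomputable def dynChromNum {V : Type} (G : SimpleGraph V) (k : ℕ) : ℕ :=
  sInf {n | DynColorable G k n}

/-- The chromatic number `χ(G)`. -/
noncomputable def chromNum {V : Type} (G : SimpleGraph V) : ℕ :=
  sInf {n | G.Colorable n}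

/-- For every finite simple graph `G` and positive integer `k`,
`χ_k(G) ≤ χ(G) · wd_k(G)`. -/
theorem dynChrom_le_chrom_mul_wd {V : Type} [Fintype V] (G : SimpleGraph V)
    (k : ℕ) (hk : 0 < k) :
    dynChromNum G k ≤ chromNum G * wdNum G k := by
  -- chromNum is attained
  have hcolset : {n | G.Colorable n}.Nonempty := ⟨Fintype.card V, G.colorable_of_fintype⟩
  have hchrom : G.Colorable (chromNum G) := Nat.sInf_mem hcolset
  -- wdNum is attained
  have hwdset : {n | WDColorable G k n}.Nonempty := by
    refine ⟨Fintype.card V, ⟨Fintype.equivFin V, fun v => ?_⟩⟩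
    rw [Set.ncard_image_of_injective _ (Fintype.equivFin V).injective]
    exact min_le_right _ _
  have hwd : WDColorable G k (wdNum G k) := Nat.sInf_mem hwdset
  obtain ⟨c2, hc2⟩ := hwd
  obtain ⟨C⟩ := hchrom
  -- pair coloring
  refine Nat.sInf_le ⟨fun v => finProdFinEquiv (C v, c2 v), ?_, ?_⟩
  · intro u v huv h
    exact C.valid huv (congrArg Prod.fst (finProdFinEquiv.injective h))
  · intro v
    refine (hc2 v).trans ?_
    have hfin : ((fun v => finProdFinEquiv (C v, c2 v)) '' G.neighborSet v).Finite :=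
      Set.toFinite _
    have himg : c2 '' G.neighborSet v =
        (fun x => (finProdFinEquiv.symm x).2) ''
          ((fun v => finProdFinEquiv (C v, c2 v)) '' G.neighborSet v) := by
      rw [← Set.image_comp]
      apply Set.image_congr
      intro a _
      exact (congrArg Prod.snd (finProdFinEquiv.symm_apply_apply (C a, c2 a))).symm
    rw [himg]
    exact Set.ncard_image_le hfin
end

section
/- Let G be a finite connected simple graph and let L be a list assignment on the vertices of G such that |L(x)| ≥ d(x) for every vertex x. If there exists a vertex v of G with |L(v)| > d(v), then G is L-choosable. -/
open SimpleGraph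

open Classical in
noncomputable def greedy {V : Type} [Fintype V] (G : SimpleGraph V) (L : V → Finset ℕ)
    (key : V → ℕ) (x : V) : ℕ :=
  let used : Finset ℕ :=
    ((Finset.univ.filter (fun y => G.Adj x y ∧ key y < key x)).attach).image
      (fun y => greedy G L key y.1)
  if h : (L x \ used).Nonempty then h.choose else 0
termination_by key x
decreasing_by
  have h2 := y.2
  simp only [Finset.mem_filter] at h2
  exact h2.2.2

open Classical in
lemma greedy_spec {V : Type} [Fintype V] (G : SimpleGraph V) (L : V → Finset ℕ)
    (key : V → ℕ) (x : V)
    (hx : (Finset.univ.filter (fun y => G.Adj x y ∧ key y < key x)).card < (L x).card) :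
    greedy G L key x ∈ L x ∧
      ∀ y, G.Adj x y → key y < key x → greedy G L key y ≠ greedy G L key x := by
  rw [greedy]
  set S := Finset.univ.filter (fun y => G.Adj x y ∧ key y < key x) with hS
  set used := S.attach.image (fun y => greedy G L key y.1) with hused
  have hcard : used.card < (L x).card := by
    calc used.card ≤ S.attach.card := Finset.card_image_le
    _ = S.card := Finset.card_attach
    _ < (L x).card := hx
  have hne : (L x \ used).Nonempty := by
    rw [← Finset.card_pos]
    have h1 : (L x \ used).card ≥ (L x).card - used.card := Finset.le_card_sdiff _ _
    omega
  rw [dif_pos hne]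
  have hmem := hne.choose_spec
  rw [Finset.mem_sdiff] at hmem
  refine ⟨hmem.1, fun y hadj hlt hne' => hmem.2 ?_⟩
  rw [← hne']
  apply Finset.mem_image.mpr
  have hyS : y ∈ S := by simp [hS, hadj, hlt]
  exact ⟨⟨y, hyS⟩, Finset.mem_attach _ _, rfl⟩

theorem choosable_of_connected_of_lists' {V : Type} [Fintype V] (G : SimpleGraph V)
    (hconn : G.Connected) (L : V → Finset ℕ)
    (hL : ∀ x, (G.neighborSet x).ncard ≤ (L x).card)
    (v : V) (hv : (G.neighborSet v).ncard < (L v).card) :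
    ∃ f : V → ℕ, (∀ x, f x ∈ L x) ∧ ∀ x y, G.Adj x y → f x ≠ f y := by
  classical
  set n := Fintype.card V with hn
  set e := Fintype.equivFin V with he
  set key : V → ℕ := fun x => (n - G.dist x v) * n + (e x : ℕ) with hkey
  have hdlt : ∀ x, G.dist x v < n := by
    intro x
    obtain ⟨p, hp, hlen⟩ := hconn.exists_path_of_dist x v
    rw [← hlen]
    exact hp.length_lt
  have hmono : ∀ x y : V, G.dist y v < G.dist x v → key x < key y := by
    intro x y h
    have h1 : n - G.dist x v + 1 ≤ n - G.dist y v := by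
      have := hdlt x
      omega
    have h2 : (n - G.dist x v + 1) * n ≤ (n - G.dist y v) * n :=
      Nat.mul_le_mul_right n h1
    have h3 : (n - G.dist x v + 1) * n = (n - G.dist x v) * n + n := by ring
    have h4 : (e x : ℕ) < n := (e x).2
    simp only [hkey]
    omega
  have hinj : Function.Injective key := by
    intro x y hxy
    simp only [hkey] at hxy
    have h4 : (e x : ℕ) < n := (e x).2
    have h5 : (e y : ℕ) < n := (e y).2
    have hmod : ((n - G.dist x v) * n + (e x : ℕ)) % n = ((n - G.dist y v) * n + (e y : ℕ)) % n := by
      rw [hxy]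
    rw [Nat.add_comm _ (e x : ℕ), Nat.add_comm _ (e y : ℕ), Nat.add_mul_mod_self_right,
      Nat.add_mul_mod_self_right, Nat.mod_eq_of_lt h4, Nat.mod_eq_of_lt h5] at hmod
    exact e.injective (Fin.ext hmod)
  -- degree as a filter card
  have hdeg : ∀ x : V, (G.neighborSet x).ncard
      = (Finset.univ.filter (fun y => G.Adj x y)).card := by
    intro x
    have : G.neighborSet x = ↑(Finset.univ.filter (fun y => G.Adj x y)) := by
      ext y; simp [SimpleGraph.neighborSet]
    rw [this, Set.ncard_coe_finset]
  -- the key counting bound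
  have hcount : ∀ x : V,
      (Finset.univ.filter (fun y => G.Adj x y ∧ key y < key x)).card < (L x).card := by
    intro x
    set S := Finset.univ.filter (fun y => G.Adj x y ∧ key y < key x) with hS
    set Nx := Finset.univ.filter (fun y => G.Adj x y) with hNx
    have hsub : S ⊆ Nx := by intro y hy; simp only [hS, hNx, Finset.mem_filter] at *; exact ⟨hy.1, hy.2.1⟩
    by_cases hxv : x = v
    · subst hxv
      calc S.card ≤ Nx.card := Finset.card_le_card hsub
        _ < (L x).card := by rw [← hdeg]; exact hv
    · -- find a neighbor strictly closer to v
      obtain ⟨p, hlen⟩ := (hconn x v).exists_walk_length_eq_dist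
      obtain ⟨y0, hadj, hy0d⟩ : ∃ y0, G.Adj x y0 ∧ G.dist y0 v < G.dist x v := by
        cases p with
        | nil => exact absurd rfl hxv
        | cons h q =>
          refine ⟨_, h, ?_⟩
          have hq : G.dist _ v ≤ q.length := SimpleGraph.dist_le q
          simp only [SimpleGraph.Walk.length_cons] at hlen
          omega
      have hy0Nx : y0 ∈ Nx := by simp [hNx, hadj]
      have hy0S : y0 ∉ S := by
        simp only [hS, Finset.mem_filter]
        rintro ⟨-, -, hlt⟩
        exact absurd (hmono x y0 hy0d) (by omega)
      have hssub : S ⊂ Nx := (Finset.ssubset_iff_of_subset hsub).mpr ⟨y0, hy0Nx, hy0S⟩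
      calc S.card < Nx.card := Finset.card_lt_card hssub
        _ = (G.neighborSet x).ncard := (hdeg x).symm
        _ ≤ (L x).card := hL x
  refine ⟨greedy G L key, fun x => (greedy_spec G L key x (hcount x)).1, ?_⟩
  intro x y hadj
  rcases lt_trichotomy (key x) (key y) with h | h | h
  · exact ((greedy_spec G L key y (hcount y)).2 x hadj.symm h)
  · exact absurd (hinj h) hadj.ne
  · exact fun hc => ((greedy_spec G L key x (hcount x)).2 y hadj h) hc.symm

/-- If `G` is a finite connected graph with a list assignment `L` satisfying
`|L(x)| ≥ d(x)` for every vertex `x`, and some vertex `v` has `|L(v)| > d(v)`,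
then `G` is `L`-choosable. -/
theorem choosable_of_connected_of_lists {V : Type} [Fintype V] (G : SimpleGraph V)
    (hconn : G.Connected) (L : V → Finset ℕ)
    (hL : ∀ x, deg G x ≤ (L x).card)
    (v : V) (hv : deg G v < (L v).card) :
    ∃ f : V → ℕ, (∀ x, f x ∈ L x) ∧ ∀ x y, G.Adj x y → f x ≠ f y := by
  simp only [deg] at hL hv
  exact choosable_of_connected_of_lists' G hconn L hL v hv
end

section
/- Let n ≥ 2 and let L be a list assignment on the vertices v_1, …, v_n of the complete graph K_n such that |L(v_i)| = n − 1 for each i and L(v_1) ≠ L(v_n). Then K_n is L-choosable. -/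
/-- Let `n ≥ 2` and let `L` be a list assignment on the vertices `v_1, …, v_n` of the
complete graph `K_n` (here indexed by `Fin n`, with `v_1` the index `0` and `v_n` the
index `n-1`) such that `|L(v_i)| = n - 1` for each `i` and `L(v_1) ≠ L(v_n)`.
Then `K_n` is `L`-choosable: there is a proper coloring of `K_n` (i.e. distinct
vertices get distinct colors) choosing each color from the corresponding list. -/
theorem completeGraph_choosable (n : ℕ) (hn : 2 ≤ n) (L : Fin n → Finset ℕ)
    (hcard : ∀ i, (L i).card = n - 1)
    (hne : L ⟨0, by omega⟩ ≠ L ⟨n - 1, by omega⟩) :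
    ∃ f : Fin n → ℕ, (∀ i, f i ∈ L i) ∧ ∀ i j : Fin n, i ≠ j → f i ≠ f j := by
  have hall : ∀ s : Finset (Fin n), s.card ≤ (s.biUnion L).card := by
    intro s
    rcases s.eq_empty_or_nonempty with rfl | ⟨i, hi⟩
    · simp
    have hsub : L i ⊆ s.biUnion L := fun x hx => Finset.mem_biUnion.2 ⟨i, hi, hx⟩
    have h1 : n - 1 ≤ (s.biUnion L).card := (hcard i) ▸ Finset.card_le_card hsub
    by_cases hs : s.card ≤ n - 1
    · omega
    · -- s = univ
      have hsle : s.card ≤ n := by simpa using Finset.card_le_card (Finset.subset_univ s)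
      have hsn : s.card = n := by omega
      have hsuniv : s = Finset.univ := Finset.eq_univ_of_card s (by simpa using hsn)
      set i0 : Fin n := ⟨0, by omega⟩
      set i1 : Fin n := ⟨n - 1, by omega⟩
      -- there is x ∈ L i1 \ L i0
      have hx : ∃ x, x ∈ L i1 ∧ x ∉ L i0 := by
        by_contra h
        push_neg at h
        have hsubset : L i1 ⊆ L i0 := fun x hx => h x hx
        exact hne ((Finset.eq_of_subset_of_card_le hsubset (by rw [hcard, hcard])).symm)
      obtain ⟨x, hx1, hx0⟩ := hx
      have hsub2 : insert x (L i0) ⊆ s.biUnion L := by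
        intro y hy
        rcases Finset.mem_insert.1 hy with rfl | hy
        · exact Finset.mem_biUnion.2 ⟨i1, hsuniv ▸ Finset.mem_univ i1, hx1⟩
        · exact Finset.mem_biUnion.2 ⟨i0, hsuniv ▸ Finset.mem_univ i0, hy⟩
      have h2 : n ≤ (s.biUnion L).card := by
        have := Finset.card_le_card hsub2
        rw [Finset.card_insert_of_notMem hx0, hcard] at this
        omega
      omega
  obtain ⟨f, hinj, hmem⟩ := (Finset.all_card_le_biUnion_card_iff_exists_injective L).1 hall
  exact ⟨f, hmem, fun i j hij => fun h => hij (hinj h)⟩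
end

section
/- Let G be a minimal counterexample to the statement that all planar graphs have 3-weak-dynamic number at most 6, chosen with the fewest edges and, among those, the fewest vertices. Then G has no vertex of degree 2 adjacent to a vertex of degree at most 3. -/
open SimpleGraph

/-! Delete the edge `uv`: by edge-minimality the smaller planar graph has a 3-weak-dynamic
6-coloring `c`, and only `u` and `v` are recolored. A neighbour `x` of `u` or `v` is safe if its
other neighbours already show three colors; otherwise the new color of its neighbour in `{u, v}`
must avoid the at most two colors they show. As `deg u = 2` and `deg v ≤ 3`, the new color of `v`
must avoid at most `1 + 2 + 2` colors and that of `u` at most `2 + 2` colors and the new color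
of `v`, so six colors suffice. -/

theorem HasMinor.mono {V W : Type} {G G' : SimpleGraph V} {H : SimpleGraph W} (hle : G ≤ G')
    (hm : HasMinor G H) : HasMinor G' H := by
  obtain ⟨f, hne, hconn, hdisj, hadj⟩ := hm
  refine ⟨f, hne, fun w => (hconn w).mono fun _ _ h => hle h, hdisj, fun w w' hw => ?_⟩
  obtain ⟨a, ha, b, hb, hab⟩ := hadj w w' hw
  exact ⟨a, ha, b, hb, hle hab⟩

theorem IsPlanar.anti {V : Type} {G G' : SimpleGraph V} (hle : G ≤ G') (h : IsPlanar G') :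
    IsPlanar G :=
  ⟨fun hm => h.1 (hm.mono hle), fun hm => h.2 (hm.mono hle)⟩

namespace Set

variable {ι α : Type*}

theorem exists_notMem_of_ncard_lt_card [Finite α] {s : Set α} (h : s.ncard < Nat.card α) :
    ∃ a, a ∉ s :=
  (ne_univ_iff_exists_notMem s).1 fun hs => by rw [hs, ncard_univ] at h; exact h.false

theorem ncard_biUnion_le_ncard_mul {t : Set ι} (ht : t.Finite) {s : ι → Set α} {b : ℕ}
    (hb : ∀ i ∈ t, (s i).ncard ≤ b) : (⋃ i ∈ t, s i).ncard ≤ t.ncard * b := by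
  lift t to Finset ι using ht
  calc (⋃ i ∈ (t : Set ι), s i).ncard ≤ ∑ i ∈ t, (s i).ncard := t.set_ncard_biUnion_le s
    _ ≤ t.card • b := Finset.sum_le_card_nsmul _ _ _ hb
    _ = (t : Set ι).ncard * b := by rw [ncard_coe_finset, smul_eq_mul]

theorem ncard_biUnion_le_of_mem {t : Set ι} (ht : t.Finite) {s : ι → Set α} {a : ι}
    (ha : a ∈ t) {b : ℕ} (hb : ∀ i ∈ t \ {a}, (s i).ncard ≤ b) :
    (⋃ i ∈ t, s i).ncard ≤ (s a).ncard + (t.ncard - 1) * b := by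
  have hsplit : ⋃ i ∈ t, s i = s a ∪ ⋃ i ∈ t \ {a}, s i := by
    conv_lhs => rw [← insert_eq_of_mem ha, ← insert_sdiff_singleton, biUnion_insert]
  calc (⋃ i ∈ t, s i).ncard ≤ (s a).ncard + (⋃ i ∈ t \ {a}, s i).ncard :=
        hsplit ▸ ncard_union_le _ _
    _ ≤ (s a).ncard + (t.ncard - 1) * b := by
        rw [← ncard_sdiff_singleton_of_mem ha]
        exact Nat.add_le_add_left (ncard_biUnion_le_ncard_mul ht.sdiff hb) _

end Set

namespace SimpleGraph

variable {V : Type} {G : SimpleGraph V}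

theorem ncard_edgeSet_deleteEdges_lt [Finite V] {u v : V} (huv : G.Adj u v) :
    (G.deleteEdges {s(u, v)}).edgeSet.ncard < G.edgeSet.ncard := by
  rw [edgeSet_deleteEdges]
  exact Set.ncard_lt_ncard (Set.sdiff_singleton_ssubset.mpr huv)

theorem neighborSet_deleteEdges_of_ne {u v x : V} (hu : x ≠ u) (hv : x ≠ v) :
    (G.deleteEdges {s(u, v)}).neighborSet x = G.neighborSet x := by
  ext y
  simp [hu, hv]

theorem neighborSet_deleteEdges_left (u v : V) :
    (G.deleteEdges {s(u, v)}).neighborSet u = G.neighborSet u \ {v} := by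
  ext y
  simp only [mem_neighborSet, deleteEdges_adj, Set.mem_singleton_iff, Sym2.eq_iff, Set.mem_sdiff]
  grind [G.ne_of_adj]

end SimpleGraph

section Recoloring

open Set

variable {V α : Type*}

/-- Adding to `c '' s` a color outside this palette either adds a new color or leaves at least
`k` colors. -/
def scarcePalette (k : ℕ) (c : V → α) (s : Set V) : Set α :=
  if (c '' s).ncard < k then c '' s else ∅

theorem ncard_scarcePalette_lt {k : ℕ} (hk : 0 < k) (c : V → α) (s : Set V) :
    (scarcePalette k c s).ncard < k := by
  unfold scarcePalette
  split_ifs with h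
  · exact h
  · rwa [ncard_empty]

theorem ncard_scarcePalette_le {s : Set V} (hs : s.Finite) (k : ℕ) (c : V → α) :
    (scarcePalette k c s).ncard ≤ s.ncard := by
  unfold scarcePalette
  split_ifs
  · exact ncard_image_le hs
  · rw [ncard_empty]; exact Nat.zero_le _

theorem le_ncard_image_of_recolor {k m : ℕ} {N S : Set V} (hN : N.Finite) {c c' : V → α}
    (hagree : EqOn c' c (N \ S)) (hinj : InjOn c' (N ∩ S))
    (hfresh : ∀ y ∈ N ∩ S, c' y ∉ scarcePalette k c (N \ S)) (hmk : m ≤ k)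
    (hm : m ≤ (N ∩ S).ncard + (c '' (N \ S)).ncard) : m ≤ (c' '' N).ncard := by
  have hsplit : c' '' N = c' '' (N ∩ S) ∪ c '' (N \ S) := by
    rw [← hagree.image_eq, ← image_union, inter_union_sdiff]
  have hfin : (c' '' (N ∩ S)).Finite := (hN.inter_of_left S).image c'
  rw [hsplit]
  by_cases hfew : (c '' (N \ S)).ncard < k
  · have hdisj : Disjoint (c' '' (N ∩ S)) (c '' (N \ S)) := by
      rw [Set.disjoint_left]
      rintro _ ⟨y, hy, rfl⟩ hmem
      exact hfresh y hy (by rwa [scarcePalette, if_pos hfew])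
    rwa [ncard_union_eq hdisj hfin ((hN.sdiff).image c), hinj.ncard_image]
  · calc m ≤ k := hmk
      _ ≤ (c '' (N \ S)).ncard := not_lt.1 hfew
      _ ≤ _ := ncard_le_ncard subset_union_right (hfin.union ((hN.sdiff).image c))

end Recoloring

namespace SimpleGraph

open Set

variable {V : Type} {α : Type*} {G : SimpleGraph V}

def IsWDColoring (G : SimpleGraph V) (k : ℕ) (c : V → α) : Prop :=
  ∀ v, min k (deg G v) ≤ (c '' G.neighborSet v).ncard

variable [Finite V] {k : ℕ} {c : V → α} {u v : V}

theorem min_deg_le_of_deleteEdges_left (huv : G.Adj u v)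
    (hc : IsWDColoring (G.deleteEdges {s(u, v)}) k c) (hu : deg G u ≤ k) :
    min k (deg G u) ≤
      (G.neighborSet u ∩ {u, v}).ncard + (c '' (G.neighborSet u \ {u, v})).ncard := by
  have hinter : G.neighborSet u ∩ {u, v} = {v} := by
    ext y
    simp only [mem_inter_iff, mem_neighborSet, mem_insert_iff, mem_singleton_iff]
    grind [G.ne_of_adj]
  have hrest : G.neighborSet u \ {u, v} = (G.deleteEdges {s(u, v)}).neighborSet u := by
    rw [neighborSet_deleteEdges_left, sdiff_insert_of_notMem G.notMem_neighborSet_self]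
  have hdeg : deg (G.deleteEdges {s(u, v)}) u + 1 = deg G u := by
    rw [deg, deg, neighborSet_deleteEdges_left]
    exact ncard_sdiff_singleton_add_one huv
  have := hc u
  rw [hinter, hrest, ncard_singleton]
  omega

theorem min_deg_le_of_deleteEdges (huv : G.Adj u v)
    (hc : IsWDColoring (G.deleteEdges {s(u, v)}) k c) (hu : deg G u ≤ k) (hv : deg G v ≤ k)
    (x : V) :
    min k (deg G x) ≤
      (G.neighborSet x ∩ {u, v}).ncard + (c '' (G.neighborSet x \ {u, v})).ncard := by
  rcases eq_or_ne x u with rfl | hxu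
  · exact min_deg_le_of_deleteEdges_left huv hc hu
  rcases eq_or_ne x v with rfl | hxv
  · rw [Sym2.eq_swap] at hc
    rw [pair_comm]
    exact min_deg_le_of_deleteEdges_left huv.symm hc hv
  have hx := hc x
  rw [deg, neighborSet_deleteEdges_of_ne hxu hxv] at hx
  calc min k (deg G x) ≤ (c '' G.neighborSet x).ncard := hx
    _ = (c '' (G.neighborSet x ∩ {u, v}) ∪ c '' (G.neighborSet x \ {u, v})).ncard := by
        rw [← image_union, inter_union_sdiff]
    _ ≤ _ := ncard_union_le _ _
    _ ≤ _ := Nat.add_le_add_right (ncard_image_le (toFinite _)) _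

def edgePalette (G : SimpleGraph V) (u v : V) (c : V → α) (x : V) : Set α :=
  scarcePalette 3 c (G.neighborSet x \ {u, v})

theorem exists_colors_notMem_edgePalette (huv : G.Adj u v) (hu : deg G u ≤ 2)
    (hv : deg G v ≤ 3) (c : V → Fin 6) :
    ∃ a b, a ≠ b ∧ (∀ x ∈ G.neighborSet u, a ∉ edgePalette G u v c x) ∧
      ∀ x ∈ G.neighborSet v, b ∉ edgePalette G u v c x := by
  set P := edgePalette G u v c
  have hP : ∀ x, (P x).ncard ≤ 2 := fun x =>
    Nat.le_of_lt_succ (ncard_scarcePalette_lt three_pos _ _)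
  have hPu : (P u).ncard ≤ 1 := by
    calc (P u).ncard ≤ (G.neighborSet u \ {u, v}).ncard := ncard_scarcePalette_le (toFinite _) _ _
      _ ≤ (G.neighborSet u \ {v}).ncard := ncard_le_ncard (sdiff_subset_sdiff_right (by simp))
      _ ≤ 1 := by
        rw [ncard_sdiff_singleton_of_mem (show v ∈ G.neighborSet u from huv)]
        unfold deg at hu
        omega
  have hNu := ncard_biUnion_le_of_mem (toFinite (G.neighborSet u)) (s := P) huv (b := 2)
    fun x _ => hP x
  have hNv := ncard_biUnion_le_of_mem (toFinite (G.neighborSet v)) (s := P) huv.symm (b := 2)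
    fun x _ => hP x
  unfold deg at hu hv
  obtain ⟨b, hb⟩ : ∃ b, b ∉ ⋃ x ∈ G.neighborSet v, P x := by
    refine exists_notMem_of_ncard_lt_card ?_
    rw [Nat.card_eq_fintype_card, Fintype.card_fin]
    omega
  obtain ⟨a, ha⟩ : ∃ a, a ∉ insert b (⋃ x ∈ G.neighborSet u, P x) := by
    refine exists_notMem_of_ncard_lt_card ((ncard_insert_le _ _).trans_lt ?_)
    rw [Nat.card_eq_fintype_card, Fintype.card_fin]
    have := hP v
    omega
  refine ⟨a, b, fun h => ha (h ▸ mem_insert a _), fun x hx hax => ?_, fun x hx hbx => ?_⟩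
  · exact ha (mem_insert_of_mem _ (mem_biUnion hx hax))
  · exact hb (mem_biUnion hx hbx)

theorem isWDColoring_update_update [DecidableEq V] (huv : G.Adj u v) (hu : deg G u ≤ 3)
    (hv : deg G v ≤ 3) (hc : IsWDColoring (G.deleteEdges {s(u, v)}) 3 c) {a b : α}
    (hab : a ≠ b)
    (ha : ∀ x ∈ G.neighborSet u, a ∉ edgePalette G u v c x)
    (hb : ∀ x ∈ G.neighborSet v, b ∉ edgePalette G u v c x) :
    IsWDColoring G 3 (Function.update (Function.update c u a) v b) := by
  set c' := Function.update (Function.update c u a) v b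
  have hc'u : c' u = a := by simp [c', G.ne_of_adj huv]
  have hc'v : c' v = b := by simp [c']
  refine fun x => le_ncard_image_of_recolor (toFinite _) ?_ ?_ ?_ (min_le_left _ _)
    (min_deg_le_of_deleteEdges huv hc hu hv x)
  · rintro y ⟨-, hy⟩
    simp only [mem_insert_iff, mem_singleton_iff, not_or] at hy
    simp [c', hy.1, hy.2]
  · refine (injOn_pair.2 fun h => absurd ?_ hab).mono inter_subset_right
    rwa [hc'u, hc'v] at h
  · rintro y ⟨hxy, rfl | rfl⟩
    · exact hc'u ▸ ha x (G.adj_symm hxy)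
    · exact hc'v ▸ hb x (G.adj_symm hxy)

theorem WDColorable.of_deleteEdges (huv : G.Adj u v) (hu : deg G u ≤ 2) (hv : deg G v ≤ 3)
    (h : WDColorable (G.deleteEdges {s(u, v)}) 3 6) : WDColorable G 3 6 := by
  classical
  obtain ⟨c, hc⟩ := h
  obtain ⟨a, b, hab, ha, hb⟩ := exists_colors_notMem_edgePalette huv hu hv c
  exact ⟨_, isWDColoring_update_update huv (by omega) hv hc hab ha hb⟩

end SimpleGraph

theorem minCounterexample_no_deg2_with_deg3_neighbor_general {V : Type} [Fintype V] (G : SimpleGraph V)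
    (hplanar : IsPlanar G) (hcex : ¬ WDColorable G 3 6)
    (hminEdges : ∀ (W : Type) [Fintype W] (H : SimpleGraph W),
      IsPlanar H → H.edgeSet.ncard < G.edgeSet.ncard → WDColorable H 3 6) :
    ¬ ∃ u v : V, G.Adj u v ∧ deg G u = 2 ∧ deg G v ≤ 3 := by
  rintro ⟨u, v, huv, hu, hv⟩
  have hcolorable := hminEdges V (G.deleteEdges {s(u, v)})
    (hplanar.anti (G.deleteEdges_le _)) (ncard_edgeSet_deleteEdges_lt huv)
  exact hcex (hcolorable.of_deleteEdges huv hu.le hv)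

/-- A minimal counterexample has no vertex of degree 2 adjacent to a vertex of degree at most 3. -/
theorem minCounterexample_no_deg2_with_deg3_neighbor {V : Type} [Fintype V] (G : SimpleGraph V)
    (hplanar : IsPlanar G) (hcex : ¬ WDColorable G 3 6)
    (hminEdges : ∀ (W : Type) [Fintype W] (H : SimpleGraph W),
      IsPlanar H → H.edgeSet.ncard < G.edgeSet.ncard → WDColorable H 3 6)
    (hminVerts : ∀ (W : Type) [Fintype W] (H : SimpleGraph W),
      IsPlanar H → ¬ WDColorable H 3 6 → H.edgeSet.ncard = G.edgeSet.ncard →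
      Nat.card V ≤ Nat.card W) :
    ¬ ∃ u v : V, G.Adj u v ∧ deg G u = 2 ∧ deg G v ≤ 3 :=
  minCounterexample_no_deg2_with_deg3_neighbor_general G hplanar hcex hminEdges
end

section
/- Let G be a minimal counterexample to the statement that all planar graphs have 3-weak-dynamic number at most 6, chosen with the fewest edges and, among those, the fewest vertices. Then G does not contain distinct vertices v_1, v_2, v_3, v_4 such that v_1v_2v_3 and v_1v_3v_4 are triangles of G (sharing the edge v_1v_3) with d(v_1) = d(v_3) = 3. -/
open SimpleGraph

private lemma hasMinor_mono {V W : Type} {G G' : SimpleGraph V} (h : G' ≤ G)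
    {H : SimpleGraph W} (hm : HasMinor G' H) : HasMinor G H := by
  obtain ⟨f, h1, h2, h3, h4⟩ := hm
  refine ⟨f, h1, fun w => (h2 w).mono (fun a b hab => h hab), h3, fun w w' hww' => ?_⟩
  obtain ⟨a, ha, b, hb, hab⟩ := h4 w w' hww'
  exact ⟨a, ha, b, hb, h hab⟩

private lemma ncard_triple {α : Type*} {a b c : α} (hab : a ≠ b) (hac : a ≠ c)
    (hbc : b ≠ c) : ({a, b, c} : Set α).ncard = 3 := by
  rw [Set.ncard_insert_of_notMem (by simp [hab, hac])
    ((Set.finite_singleton c).insert b), Set.ncard_pair hbc]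

/-- A minimal counterexample contains no two triangles v₁v₂v₃ and v₁v₃v₄ sharing the edge v₁v₃ with d(v₁) = d(v₃) = 3. -/
theorem minCounterexample_no_adjacent_triangles_deg3_shared_edge {V : Type} [Fintype V] (G : SimpleGraph V)
    (hplanar : IsPlanar G) (hcex : ¬ WDColorable G 3 6)
    (hminEdges : ∀ (W : Type) [Fintype W] (H : SimpleGraph W),
      IsPlanar H → H.edgeSet.ncard < G.edgeSet.ncard → WDColorable H 3 6)
    (hminVerts : ∀ (W : Type) [Fintype W] (H : SimpleGraph W),
      IsPlanar H → ¬ WDColorable H 3 6 → H.edgeSet.ncard = G.edgeSet.ncard →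
      Nat.card V ≤ Nat.card W) :
    ¬ ∃ v₁ v₂ v₃ v₄ : V,
      ([v₁, v₂, v₃, v₄] : List V).Pairwise (· ≠ ·) ∧
      G.Adj v₁ v₂ ∧ G.Adj v₂ v₃ ∧ G.Adj v₁ v₃ ∧ G.Adj v₃ v₄ ∧ G.Adj v₁ v₄ ∧
      deg G v₁ = 3 ∧ deg G v₃ = 3 := by
  classical
  rintro ⟨v₁, v₂, v₃, v₄, hpw, a12, a23, a13, a34, a14, hd1, hd3⟩
  obtain - | ⟨hp1, hpw⟩ := hpw
  obtain - | ⟨hp2, hpw⟩ := hpw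
  obtain - | ⟨hp3, -⟩ := hpw
  have h12 : v₁ ≠ v₂ := hp1 v₂ (by simp)
  have h13 : v₁ ≠ v₃ := hp1 v₃ (by simp)
  have h14 : v₁ ≠ v₄ := hp1 v₄ (by simp)
  have h23 : v₂ ≠ v₃ := hp2 v₃ (by simp)
  have h24 : v₂ ≠ v₄ := hp2 v₄ (by simp)
  have h34 : v₃ ≠ v₄ := hp3 v₄ (by simp)
  -- neighborhoods of v₁ and v₃
  have hN1 : G.neighborSet v₁ = {v₂, v₃, v₄} := by
    symm
    apply Set.eq_of_subset_of_ncard_le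
    · intro x hx
      rcases hx with rfl | rfl | rfl
      exacts [a12, a13, a14]
    · rw [show (G.neighborSet v₁).ncard = 3 from hd1, ncard_triple h23 h24 h34]
    · exact Set.toFinite _
  have hN3 : G.neighborSet v₃ = {v₁, v₂, v₄} := by
    symm
    apply Set.eq_of_subset_of_ncard_le
    · intro x hx
      rcases hx with rfl | rfl | rfl
      exacts [a13.symm, a23.symm, a34]
    · rw [show (G.neighborSet v₃).ncard = 3 from hd3, ncard_triple h12 h14 h24]
    · exact Set.toFinite _
  -- the smaller graph
  set G' : SimpleGraph V := G.deleteEdges {s(v₁, v₃)} with hG'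
  have hle : G' ≤ G := deleteEdges_le _
  have hplanar' : IsPlanar G' :=
    ⟨fun h => hplanar.1 (hasMinor_mono hle h), fun h => hplanar.2 (hasMinor_mono hle h)⟩
  have hlt : G'.edgeSet.ncard < G.edgeSet.ncard := by
    rw [hG', edgeSet_deleteEdges]
    refine Set.ncard_lt_ncard ?_ (Set.toFinite _)
    exact Set.sdiff_singleton_ssubset.mpr a13
  obtain ⟨c, hc⟩ := hminEdges V G' hplanar' hlt
  -- neighborhoods in G'
  have hN1' : G'.neighborSet v₁ = {v₂, v₄} := by
    ext x
    simp only [mem_neighborSet, hG', deleteEdges_adj, Set.mem_singleton_iff,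
      Set.mem_insert_iff]
    constructor
    · rintro ⟨hadj, hne⟩
      have hx : x ∈ G.neighborSet v₁ := hadj
      rw [hN1] at hx
      rcases hx with rfl | rfl | rfl
      · exact Or.inl rfl
      · exact absurd rfl hne
      · exact Or.inr rfl
    · rintro (rfl | rfl)
      · exact ⟨a12, by simp [Sym2.eq_iff, h13, h23]⟩
      · exact ⟨a14, by simp [Sym2.eq_iff, h13, h34.symm]⟩
  have hN3' : G'.neighborSet v₃ = {v₂, v₄} := by
    ext x
    simp only [mem_neighborSet, hG', deleteEdges_adj, Set.mem_singleton_iff,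
      Set.mem_insert_iff]
    constructor
    · rintro ⟨hadj, hne⟩
      have hx : x ∈ G.neighborSet v₃ := hadj
      rw [hN3] at hx
      rcases hx with rfl | rfl | rfl
      · exact absurd (Sym2.eq_swap) hne
      · exact Or.inl rfl
      · exact Or.inr rfl
    · rintro (rfl | rfl)
      · exact ⟨a23.symm, by simp [Sym2.eq_iff, h13.symm, h12.symm]⟩
      · exact ⟨a34, by simp [Sym2.eq_iff, h13.symm, h14.symm]⟩
  -- c v₂ ≠ c v₄
  have key := hc v₁
  rw [show deg G' v₁ = 2 by rw [deg, hN1', Set.ncard_pair h24], hN1'] at key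
  norm_num at key
  have hc24 : c v₂ ≠ c v₄ := by
    intro h
    rw [Set.image_pair, h, Set.pair_eq_singleton, Set.ncard_singleton] at key
    omega
  -- pick witnesses for extra neighbors of v₂ and v₄
  set T₂ : Set V := G.neighborSet v₂ \ {v₁, v₃} with hT₂def
  set T₄ : Set V := G.neighborSet v₄ \ {v₁, v₃} with hT₄def
  set w₂ : V := if h : T₂.Nonempty then h.choose else v₂ with hw₂def
  set w₄ : V := if h : T₄.Nonempty then h.choose else v₄ with hw₄def
  -- pick two fresh colors
  have hcompl : 1 < (({c v₂, c v₄, c w₂, c w₄} : Finset (Fin 6))ᶜ).card := by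
    have h1 := Finset.card_insert_le (c v₂) ({c v₄, c w₂, c w₄} : Finset (Fin 6))
    have h2 := Finset.card_insert_le (c v₄) ({c w₂, c w₄} : Finset (Fin 6))
    have h3 := Finset.card_insert_le (c w₂) ({c w₄} : Finset (Fin 6))
    have h4 : ({c w₄} : Finset (Fin 6)).card = 1 := Finset.card_singleton _
    have h5 := Finset.card_compl (({c v₂, c v₄, c w₂, c w₄} : Finset (Fin 6)))
    simp only [Fintype.card_fin] at h5
    omega
  obtain ⟨α, hα, β, hβ, hαβ⟩ := Finset.one_lt_card.mp hcompl
  simp only [Finset.mem_compl, Finset.mem_insert, Finset.mem_singleton, not_or] at hα hβ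
  obtain ⟨hα2, hα4, hαw2, hαw4⟩ := hα
  obtain ⟨hβ2, hβ4, hβw2, hβw4⟩ := hβ
  -- the new coloring
  set c' : V → Fin 6 := fun v => if v = v₁ then α else if v = v₃ then β else c v with hc'def
  have hc'1 : c' v₁ = α := by simp [hc'def]
  have hc'3 : c' v₃ = β := by simp [hc'def, h13.symm]
  have hc'other : ∀ v, v ≠ v₁ → v ≠ v₃ → c' v = c v := by
    intro v hv1 hv3; simp [hc'def, hv1, hv3]
  apply hcex
  refine ⟨c', fun v => ?_⟩
  by_cases hv1 : v = v₁
  · rw [hv1]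
    have himg : c' '' G.neighborSet v₁ = {c v₂, β, c v₄} := by
      rw [hN1, Set.image_insert_eq, Set.image_insert_eq, Set.image_singleton,
        hc'other v₂ h12.symm h23, hc'3, hc'other v₄ h14.symm h34.symm]
    rw [himg, ncard_triple (Ne.symm hβ2) hc24 hβ4]
    exact min_le_left _ _
  by_cases hv3 : v = v₃
  · rw [hv3]
    have himg : c' '' G.neighborSet v₃ = {α, c v₂, c v₄} := by
      rw [hN3, Set.image_insert_eq, Set.image_insert_eq, Set.image_singleton,
        hc'1, hc'other v₂ h12.symm h23, hc'other v₄ h14.symm h34.symm]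
    rw [himg, ncard_triple hα2 hα4 hc24]
    exact min_le_left _ _
  by_cases hv2 : v = v₂
  · rw [hv2]
    by_cases hT : T₂.Nonempty
    · have hwspec : w₂ ∈ T₂ := by rw [hw₂def, dif_pos hT]; exact hT.choose_spec
      rw [hT₂def] at hwspec
      obtain ⟨hwmem, hwne⟩ := hwspec
      simp only [Set.mem_insert_iff, Set.mem_singleton_iff, not_or] at hwne
      have hsub : ({α, β, c w₂} : Set (Fin 6)) ⊆ c' '' G.neighborSet v₂ := by
        rintro x (rfl | rfl | rfl)
        · exact ⟨v₁, a12.symm, hc'1⟩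
        · exact ⟨v₃, a23, hc'3⟩
        · exact ⟨w₂, hwmem, hc'other w₂ hwne.1 hwne.2⟩
      have h3le : 3 ≤ (c' '' G.neighborSet v₂).ncard := by
        rw [← ncard_triple hαβ hαw2 hβw2]
        exact Set.ncard_le_ncard hsub (Set.toFinite _)
      exact le_trans (min_le_left _ _) h3le
    · have hTe : T₂ = ∅ := Set.not_nonempty_iff_eq_empty.mp hT
      rw [hT₂def] at hTe
      have hNeq : G.neighborSet v₂ = {v₁, v₃} := by
        apply subset_antisymm
        · intro x hx
          by_contra hxn
          exact (Set.eq_empty_iff_forall_notMem.mp hTe x) ⟨hx, hxn⟩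
        · rintro x (rfl | rfl)
          · exact a12.symm
          · exact a23
      have himg : c' '' G.neighborSet v₂ = {α, β} := by
        rw [hNeq, Set.image_pair, hc'1, hc'3]
      rw [himg, Set.ncard_pair hαβ, show deg G v₂ = 2 by
        rw [deg, hNeq, Set.ncard_pair h13]]
      norm_num
  by_cases hv4 : v = v₄
  · rw [hv4]
    by_cases hT : T₄.Nonempty
    · have hwspec : w₄ ∈ T₄ := by rw [hw₄def, dif_pos hT]; exact hT.choose_spec
      rw [hT₄def] at hwspec
      obtain ⟨hwmem, hwne⟩ := hwspec
      simp only [Set.mem_insert_iff, Set.mem_singleton_iff, not_or] at hwne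
      have hsub : ({α, β, c w₄} : Set (Fin 6)) ⊆ c' '' G.neighborSet v₄ := by
        rintro x (rfl | rfl | rfl)
        · exact ⟨v₁, a14.symm, hc'1⟩
        · exact ⟨v₃, a34.symm, hc'3⟩
        · exact ⟨w₄, hwmem, hc'other w₄ hwne.1 hwne.2⟩
      have h3le : 3 ≤ (c' '' G.neighborSet v₄).ncard := by
        rw [← ncard_triple hαβ hαw4 hβw4]
        exact Set.ncard_le_ncard hsub (Set.toFinite _)
      exact le_trans (min_le_left _ _) h3le
    · have hTe : T₄ = ∅ := Set.not_nonempty_iff_eq_empty.mp hT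
      rw [hT₄def] at hTe
      have hNeq : G.neighborSet v₄ = {v₁, v₃} := by
        apply subset_antisymm
        · intro x hx
          by_contra hxn
          exact (Set.eq_empty_iff_forall_notMem.mp hTe x) ⟨hx, hxn⟩
        · rintro x (rfl | rfl)
          · exact a14.symm
          · exact a34.symm
      have himg : c' '' G.neighborSet v₄ = {α, β} := by
        rw [hNeq, Set.image_pair, hc'1, hc'3]
      rw [himg, Set.ncard_pair hαβ, show deg G v₄ = 2 by
        rw [deg, hNeq, Set.ncard_pair h13]]
      norm_num
  -- generic vertex
  · have hmem1 : v₁ ∉ G.neighborSet v := by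
      intro h
      have hv : v ∈ G.neighborSet v₁ := ((G.mem_neighborSet v v₁).mp h).symm
      rw [hN1] at hv
      rcases hv with rfl | rfl | rfl
      exacts [hv2 rfl, hv3 rfl, hv4 rfl]
    have hmem3 : v₃ ∉ G.neighborSet v := by
      intro h
      have hv : v ∈ G.neighborSet v₃ := ((G.mem_neighborSet v v₃).mp h).symm
      rw [hN3] at hv
      rcases hv with rfl | rfl | rfl
      exacts [hv1 rfl, hv2 rfl, hv4 rfl]
    have hnn : G'.neighborSet v = G.neighborSet v := by
      ext x
      simp only [mem_neighborSet, hG', deleteEdges_adj, Set.mem_singleton_iff]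
      refine ⟨fun h => h.1, fun h => ⟨h, ?_⟩⟩
      rw [Sym2.eq_iff]
      rintro (⟨rfl, rfl⟩ | ⟨rfl, rfl⟩)
      exacts [hv1 rfl, hv3 rfl]
    have himg : c' '' G.neighborSet v = c '' G.neighborSet v := by
      apply Set.image_congr
      intro u hu
      exact hc'other u (fun h => hmem1 (h ▸ hu)) (fun h => hmem3 (h ▸ hu))
    have hdeq : deg G' v = deg G v := by rw [deg, deg, hnn]
    have hthis := hc v
    rw [hdeq, hnn] at hthis
    rw [himg]
    exact hthis
end
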